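/- For N = 2 qubits (smallest even case with periodic boundary), V = σ^x_1 σ^y_2 − σ^y_2 σ^x_1 = 0; more generally, for even N, the operator V = Σ_{k=1}^{N/2}(σ^x_{2k-1}σ^y_{2k} − σ^y_{2k}σ^x_{2k+1}) is Hermitian and its spectrum is contained in {N − 2M : M an integer, 0 ≤ M ≤ N, M ≡ N/2 mod 2}. -/

import Mathlib

noncomputable section
open Matrix Complex BigOperators Finset

/-- Pauli x matrix. -/
def pX : Matrix (Fin 2) (Fin 2) ℂ := !![0, 1; 1, 0]
/-- Pauli y matrix. -/
def pY : Matrix (Fin 2) (Fin 2) ℂ := !![0, -Complex.I; Complex.I, 0]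
/-- Pauli z matrix. -/
def pZ : Matrix (Fin 2) (Fin 2) ℂ := !![1, 0; 0, -1]

/-- The operator acting as `A` on the `n`-th qubit (0-based) and as identity elsewhere,
on the `N`-qubit space `(ℂ²)^⊗N`, realized as matrices indexed by `Fin N → Fin 2`. -/
def site (N : ℕ) (A : Matrix (Fin 2) (Fin 2) ℂ) (n : Fin N) :
    Matrix (Fin N → Fin 2) (Fin N → Fin 2) ℂ :=
  Matrix.of fun s t => ∏ j : Fin N, if j = n then A (s j) (t j) else if s j = t j then 1 else 0

open Fin.NatCast in
/-- The chiral operator `V = Σ_{k=1}^{N/2} (σ^x_{2k-1} σ^y_{2k} − σ^y_{2k} σ^x_{2k+1})`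
(1-based paper indices; here sites are 0-based, and indices are taken mod N via `Nat.cast`). -/
def Vop (N : ℕ) [NeZero N] : Matrix (Fin N → Fin 2) (Fin N → Fin 2) ℂ :=
  ∑ k ∈ Finset.range (N / 2),
    (site N pX (↑(2 * k)) * site N pY (↑(2 * k + 1))
      - site N pY (↑(2 * k + 1)) * site N pX (↑(2 * k + 2)))

/-!
Conjugating by the tensor product of the eigenbasis matrices of `σ^x` (even sites) and `σ^y`
(odd sites) turns `V` into the same expression in `σ^z`, which is diagonal. A diagonal entry is
a sum of `N` bond terms `±1`, and their product is `(-1)^(N/2)` because every spin of the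
periodic chain enters exactly two bonds; so the entry is `N - 2M` with `M`, the number of `-1`
terms, of the parity of `N/2`. Hermiticity holds because each term is a product of commuting
Hermitian operators on distinct sites, and for `N = 2` the two terms of `V` coincide since
site `2` is site `0`.
-/

open Fin.NatCast

section PiKron

variable {ι d R : Type*} [Fintype ι] [CommRing R]

def piKron (A : ι → Matrix d d R) : Matrix (ι → d) (ι → d) R :=
  Matrix.of fun s t => ∏ j, A j (s j) (t j)

theorem piKron_mul [DecidableEq ι] [Fintype d] (A B : ι → Matrix d d R) :
    piKron A * piKron B = piKron (A * B) := by
  ext s t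
  simp only [piKron, mul_apply, of_apply, Pi.mul_apply, Fintype.prod_sum]
  exact Finset.sum_congr rfl fun x _ => Finset.prod_mul_distrib.symm

theorem piKron_one [DecidableEq d] : piKron (1 : ι → Matrix d d R) = 1 := by
  ext s t
  simp only [piKron, of_apply, Pi.one_apply, one_apply]
  by_cases h : s = t
  · simp [h]
  · obtain ⟨j, hj⟩ := Function.ne_iff.mp h
    rw [if_neg h]
    exact Finset.prod_eq_zero (mem_univ j) (if_neg hj)

def piKronHom [DecidableEq ι] [Fintype d] [DecidableEq d] :
    (ι → Matrix d d R) →* Matrix (ι → d) (ι → d) R where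
  toFun := piKron
  map_one' := piKron_one
  map_mul' A B := (piKron_mul A B).symm

theorem isUnit_piKron [DecidableEq ι] [Fintype d] [DecidableEq d] {A : ι → Matrix d d R}
    (hA : ∀ j, IsUnit (A j)) : IsUnit (piKron A) :=
  (Pi.isUnit_iff.mpr hA).map piKronHom

theorem piKron_conjTranspose [StarRing R] (A : ι → Matrix d d R) :
    (piKron A)ᴴ = piKron fun j => (A j)ᴴ := by
  ext s t
  simp [piKron, conjTranspose_apply, star_prod]

theorem piKron_diagonal [DecidableEq d] (e : ι → d → R) :
    piKron (fun j => diagonal (e j)) = diagonal fun s => ∏ j, e j (s j) := by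
  ext s t
  simp only [piKron, of_apply]
  by_cases h : s = t
  · simp [h]
  · obtain ⟨j, hj⟩ := Function.ne_iff.mp h
    rw [diagonal_apply_ne _ h]
    exact Finset.prod_eq_zero (mem_univ j) (diagonal_apply_ne _ hj)

end PiKron

section Site

variable {N : ℕ}

theorem site_eq_piKron (A : Matrix (Fin 2) (Fin 2) ℂ) (n : Fin N) :
    site N A n = piKron (Pi.mulSingle n A) := by
  ext s t
  simp only [site, piKron, of_apply]
  refine Finset.prod_congr rfl fun j _ => ?_
  by_cases h : j = n <;> simp [h, one_apply]

theorem site_commute (A B : Matrix (Fin 2) (Fin 2) ℂ) {a b : Fin N} (hab : a ≠ b) :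
    Commute (site N A a) (site N B b) := by
  rw [site_eq_piKron, site_eq_piKron]
  exact (Pi.mulSingle_commute hab A B).map piKronHom

theorem isHermitian_site {A : Matrix (Fin 2) (Fin 2) ℂ} (hA : A.IsHermitian) (n : Fin N) :
    (site N A n).IsHermitian := by
  rw [IsHermitian, site_eq_piKron, piKron_conjTranspose]
  congr 1
  funext j
  by_cases h : j = n <;> simp [h, hA.eq]

theorem site_mul_piKron {A B : Matrix (Fin 2) (Fin 2) ℂ}
    {U : Fin N → Matrix (Fin 2) (Fin 2) ℂ} {n : Fin N} (h : A * U n = U n * B) :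
    site N A n * piKron U = piKron U * site N B n := by
  rw [site_eq_piKron, site_eq_piKron, piKron_mul, piKron_mul]
  congr 1
  funext j
  by_cases hj : j = n
  · subst hj; simpa using h
  · simp [hj]

theorem site_diagonal (e : Fin 2 → ℂ) (n : Fin N) :
    site N (diagonal e) n = diagonal fun s => e (s n) := by
  have : Pi.mulSingle n (diagonal e) =
      fun j => diagonal ((Pi.mulSingle n e : Fin N → Fin 2 → ℂ) j) := by
    funext j
    by_cases h : j = n
    · subst h; simp
    · simp [h]
  rw [site_eq_piKron, this, piKron_diagonal]
  congr 1
  funext s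
  rw [Finset.prod_eq_single n (fun j _ hj => by simp [hj]) (by simp)]
  simp

end Site

def spin : Fin 2 → ℂ := ![1, -1]

theorem spin_eq_one_or_neg_one (i : Fin 2) : spin i = 1 ∨ spin i = -1 := by
  fin_cases i <;> simp [spin]

theorem pZ_eq_diagonal : pZ = diagonal spin := by
  ext i j; fin_cases i <;> fin_cases j <;> simp [pZ, spin]

theorem pX_isHermitian : pX.IsHermitian := by
  ext i j; fin_cases i <;> fin_cases j <;> simp [pX]

theorem pY_isHermitian : pY.IsHermitian := by
  ext i j; fin_cases i <;> fin_cases j <;> simp [pY]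

def eigenbasisX : Matrix (Fin 2) (Fin 2) ℂ := !![1, 1; 1, -1]

def eigenbasisY : Matrix (Fin 2) (Fin 2) ℂ := !![1, 1; Complex.I, -Complex.I]

theorem pX_mul_eigenbasisX : pX * eigenbasisX = eigenbasisX * pZ := by
  ext i j; fin_cases i <;> fin_cases j <;> simp [pX, pZ, eigenbasisX, mul_apply]

theorem pY_mul_eigenbasisY : pY * eigenbasisY = eigenbasisY * pZ := by
  ext i j; fin_cases i <;> fin_cases j <;> simp [pY, pZ, eigenbasisY, mul_apply]

theorem isUnit_eigenbasisX : IsUnit eigenbasisX := by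
  rw [isUnit_iff_isUnit_det, isUnit_iff_ne_zero, eigenbasisX, det_fin_two_of]
  norm_num

theorem isUnit_eigenbasisY : IsUnit eigenbasisY := by
  rw [isUnit_iff_isUnit_det, isUnit_iff_ne_zero, eigenbasisY, det_fin_two_of]
  ring_nf
  simp

section Chiral

variable {N : ℕ} [NeZero N]

theorem even_val_natCast_iff (hN : Even N) (a : ℕ) : Even ((a : Fin N) : ℕ) ↔ Even a := by
  rw [Fin.val_natCast, Nat.even_iff, Nat.even_iff, Nat.mod_mod_of_dvd _ hN.two_dvd]

theorem odd_val_natCast_iff (hN : Even N) (a : ℕ) : Odd ((a : Fin N) : ℕ) ↔ Odd a := by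
  rw [← Nat.not_even_iff_odd, ← Nat.not_even_iff_odd, even_val_natCast_iff hN]

theorem natCast_ne_of_even_of_odd (hN : Even N) {a b : ℕ} (ha : Even a) (hb : Odd b) :
    (a : Fin N) ≠ b := by
  intro h
  have := (even_val_natCast_iff hN a).mpr ha
  rw [h, even_val_natCast_iff hN] at this
  exact Nat.not_even_iff_odd.mpr hb this

def chiralOp (N : ℕ) [NeZero N] (A B : Matrix (Fin 2) (Fin 2) ℂ) :
    Matrix (Fin N → Fin 2) (Fin N → Fin 2) ℂ :=
  ∑ k ∈ range (N / 2),
    (site N A (↑(2 * k)) * site N B (↑(2 * k + 1))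
      - site N B (↑(2 * k + 1)) * site N A (↑(2 * k + 2)))

theorem Vop_eq_chiralOp : Vop N = chiralOp N pX pY := rfl

theorem chiralOp_two (A B : Matrix (Fin 2) (Fin 2) ℂ) : chiralOp 2 A B = 0 := by
  have h20 : ((2 * 0 + 2 : ℕ) : Fin 2) = ((2 * 0 : ℕ) : Fin 2) := by decide
  have h01 : ((2 * 0 : ℕ) : Fin 2) ≠ ((2 * 0 + 1 : ℕ) : Fin 2) := by decide
  rw [chiralOp, Nat.div_self two_pos, sum_range_one, h20, (site_commute A B h01).eq, sub_self]

theorem isHermitian_chiralOp (hN : Even N) {A B : Matrix (Fin 2) (Fin 2) ℂ}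
    (hA : A.IsHermitian) (hB : B.IsHermitian) : (chiralOp N A B).IsHermitian := by
  refine isSelfAdjoint_sum _ fun k _ => IsHermitian.sub ?_ ?_
  · refine ((isHermitian_site hA _).commute_iff (isHermitian_site hB _)).mp (site_commute A B ?_)
    exact natCast_ne_of_even_of_odd hN (even_two_mul k) (odd_two_mul_add_one k)
  · refine ((isHermitian_site hB _).commute_iff (isHermitian_site hA _)).mp (site_commute B A ?_)
    exact (natCast_ne_of_even_of_odd hN ⟨k + 1, by ring⟩ (odd_two_mul_add_one k)).symm

theorem chiralOp_mul_piKron (hN : Even N) {A B A' B' : Matrix (Fin 2) (Fin 2) ℂ}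
    {U : Fin N → Matrix (Fin 2) (Fin 2) ℂ}
    (hA : ∀ j : Fin N, Even (j : ℕ) → A * U j = U j * A')
    (hB : ∀ j : Fin N, Odd (j : ℕ) → B * U j = U j * B') :
    chiralOp N A B * piKron U = piKron U * chiralOp N A' B' := by
  rw [chiralOp, chiralOp, sum_mul, mul_sum]
  refine sum_congr rfl fun k _ => ?_
  have h0 := site_mul_piKron (hA _ ((even_val_natCast_iff hN (2 * k)).mpr (even_two_mul k)))
  have h1 := site_mul_piKron (hB _ ((odd_val_natCast_iff hN _).mpr (odd_two_mul_add_one k)))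
  have h2 := site_mul_piKron (hA _ ((even_val_natCast_iff hN (2 * k + 2)).mpr ⟨k + 1, by ring⟩))
  rw [sub_mul, mul_sub, mul_assoc, h1, ← mul_assoc, h0, mul_assoc (site N B _), h2,
    ← mul_assoc, h1, mul_assoc, mul_assoc]

def chiralEnergy (N : ℕ) [NeZero N] (z : Fin N → ℂ) : ℂ :=
  ∑ k ∈ range (N / 2), (z ↑(2 * k) * z ↑(2 * k + 1) - z ↑(2 * k + 1) * z ↑(2 * k + 2))

theorem chiralOp_diagonal (e : Fin 2 → ℂ) :
    chiralOp N (diagonal e) (diagonal e) = diagonal fun s => chiralEnergy N (e ∘ s) := by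
  ext s t
  simp only [chiralOp, chiralEnergy, site_diagonal, diagonal_mul_diagonal, Matrix.sum_apply,
    Matrix.sub_apply, diagonal_apply, Function.comp_apply]
  split_ifs <;> simp

end Chiral

theorem spectrum_Vop {N : ℕ} [NeZero N] (hN : Even N) :
    spectrum ℂ (Vop N) = Set.range fun s => chiralEnergy N (spin ∘ s) := by
  let U : Fin N → Matrix (Fin 2) (Fin 2) ℂ := fun j =>
    if Even (j : ℕ) then eigenbasisX else eigenbasisY
  obtain ⟨u, hu⟩ := isUnit_piKron (A := U) fun j => by
    by_cases h : Even (j : ℕ) <;> simp [U, h, isUnit_eigenbasisX, isUnit_eigenbasisY]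
  have hconj : Vop N * u = u * chiralOp N pZ pZ := by
    rw [hu, Vop_eq_chiralOp]
    refine chiralOp_mul_piKron hN (fun j hj => ?_) (fun j hj => ?_)
    · simpa [U, hj] using pX_mul_eigenbasisX
    · simpa [U, Nat.not_even_iff_odd.mpr hj] using pY_mul_eigenbasisY
  rw [(u.eq_mul_inv_iff_mul_eq).mpr hconj, spectrum.units_conjugate, pZ_eq_diagonal,
    chiralOp_diagonal, spectrum_diagonal]

theorem exists_sum_eq_and_prod_eq_of_eq_one_or_neg_one {ι R : Type*} [CommRing R]
    (t : Finset ι) (f : ι → R) (hf : ∀ i ∈ t, f i = 1 ∨ f i = -1) :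
    ∃ M ≤ #t, ∑ i ∈ t, f i = #t - 2 * M ∧ ∏ i ∈ t, f i = (-1) ^ M := by
  classical
  set M := #{i ∈ t | f i = -1}
  have hsplit : M + #{i ∈ t | ¬f i = -1} = #t := card_filter_add_card_filter_not _
  have hone : ∀ i ∈ t.filter (fun i => ¬f i = -1), f i = 1 := fun i hi => by
    obtain ⟨hi, hne⟩ := mem_filter.mp hi
    exact (hf i hi).resolve_right hne
  refine ⟨M, card_filter_le _ _, ?_, ?_⟩
  · rw [← sum_filter_add_sum_filter_not t (fun i => f i = -1),
      sum_congr rfl fun i hi => (mem_filter.mp hi).2,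
      sum_congr rfl hone, sum_const, sum_const, ← hsplit]
    push_cast [nsmul_eq_mul]
    ring
  · rw [← prod_filter_mul_prod_filter_not t (fun i => f i = -1),
      prod_congr rfl fun i hi => (mem_filter.mp hi).2,
      prod_congr rfl hone, prod_const, prod_const_one, mul_one]

theorem prod_range_succ_eq_of_periodic {M : Type*} [CommMonoid M] (f : ℕ → M) {m : ℕ}
    (h : f m = f 0) : ∏ k ∈ range m, f (k + 1) = ∏ k ∈ range m, f k := by
  cases m with
  | zero => simp
  | succ n => rw [prod_range_succ, h, ← prod_range_succ' f]

theorem mod_two_eq_of_neg_one_pow_eq {R : Type*} [Ring R] (hR : (-1 : R) ≠ 1) {a b : ℕ}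
    (h : (-1 : R) ^ a = (-1) ^ b) : a % 2 = b % 2 := by
  have hab : (-1 : R) ^ (a + b) = 1 := by
    rw [pow_add, h, ← pow_add, ← two_mul, pow_mul, neg_one_sq, one_pow]
  have := Nat.even_add.mp ((neg_one_pow_eq_one_iff_even hR).mp hab)
  rw [Nat.even_iff, Nat.even_iff] at this
  omega

theorem exists_chiralEnergy_eq {N : ℕ} [NeZero N] (hN : Even N) {z : Fin N → ℂ}
    (hz : ∀ j, z j = 1 ∨ z j = -1) :
    ∃ M : ℕ, M ≤ N ∧ M % 2 = (N / 2) % 2 ∧ chiralEnergy N z = N - 2 * M := by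
  set m := N / 2
  have hNm : N = 2 * m := (Nat.two_mul_div_two_of_even hN).symm
  have hmul : ∀ x y : ℂ, (x = 1 ∨ x = -1) → (y = 1 ∨ y = -1) →
      x * y = 1 ∨ x * y = -1 := by
    rintro x y (rfl | rfl) (rfl | rfl) <;> norm_num
  have hsq : ∀ j, z j * z j = 1 := fun j => by rcases hz j with h | h <;> rw [h] <;> norm_num
  obtain ⟨A, hAm, hsumA, hprodA⟩ := exists_sum_eq_and_prod_eq_of_eq_one_or_neg_one (range m)
    (fun k => z ↑(2 * k) * z ↑(2 * k + 1)) fun k _ => hmul _ _ (hz _) (hz _)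
  obtain ⟨B, hBm, hsumB, hprodB⟩ := exists_sum_eq_and_prod_eq_of_eq_one_or_neg_one (range m)
    (fun k => -(z ↑(2 * k + 1) * z ↑(2 * k + 2))) fun k _ => by
      rcases hmul _ _ (hz ↑(2 * k + 1)) (hz ↑(2 * k + 2)) with h | h <;> rw [h] <;> norm_num
  rw [card_range] at hAm hBm hsumA hsumB
  have hprod : (-1 : ℂ) ^ (A + B) = (-1) ^ m := by
    let w : ℕ → ℂ := fun k => z ↑(2 * k)
    have hper : w m = w 0 := by simp [w, ← hNm]
    rw [pow_add, ← hprodA, ← hprodB, ← prod_mul_distrib]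
    calc ∏ k ∈ range m, z ↑(2 * k) * z ↑(2 * k + 1) * -(z ↑(2 * k + 1) * z ↑(2 * k + 2))
        = ∏ k ∈ range m, (-1) * (w k * w (k + 1)) := prod_congr rfl fun k _ => by
          simp only [w, mul_add, mul_one]
          linear_combination (-(z ↑(2 * k) * z ↑(2 * k + 2))) * hsq ↑(2 * k + 1)
      _ = (-1) ^ m * ∏ k ∈ range m, (w k * w k) := by
          rw [prod_mul_distrib, prod_const, card_range, prod_mul_distrib,
            prod_range_succ_eq_of_periodic w hper, prod_mul_distrib]
      _ = (-1) ^ m := by simp only [w, hsq, prod_const_one, mul_one]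
  refine ⟨A + B, by omega, mod_two_eq_of_neg_one_pow_eq (by norm_num) hprod, ?_⟩
  simp only [chiralEnergy, sub_eq_add_neg, sum_add_distrib]
  rw [hsumA, hsumB, hNm]
  push_cast
  ring

/-- for `N = 2`, `V = σ^x_1 σ^y_2 − σ^y_2 σ^x_1 = 0`; more generally, for even
`N`, the operator `V` is Hermitian and its spectrum is contained in
`{N − 2M : M ∈ ℕ, M ≤ N, M ≡ N/2 mod 2}`. -/
theorem stmt1 (N : ℕ) [NeZero N] (hEven : Even N) :
    Vop 2 = 0 ∧ (Vop N).IsHermitian ∧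
      ∀ μ ∈ spectrum ℂ (Vop N), ∃ M : ℕ, M ≤ N ∧ M % 2 = (N / 2) % 2 ∧ μ = (N : ℂ) - 2 * M := by
  refine ⟨chiralOp_two pX pY, isHermitian_chiralOp hEven pX_isHermitian pY_isHermitian,
    fun μ hμ => ?_⟩
  rw [spectrum_Vop hEven] at hμ
  obtain ⟨s, rfl⟩ := hμ
  exact exists_chiralEnergy_eq hEven fun j => spin_eq_one_or_neg_one (s j)
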